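/- Let G be a graph of minimum degree at least two such that γ_{2,t}(G) = max{γ_r(G), 2·ρ(G)}. Then for any noncomplete graph H, γ_r(G∘H) = γ_{2,t}(G). -/

import Mathlib

open Finset
open scoped Classical

/-- The lexicographic product of two simple graphs. -/
def lexProd {α β : Type*} (G : SimpleGraph α) (H : SimpleGraph β) :
    SimpleGraph (α × β) where
  Adj p q := G.Adj p.1 q.1 ∨ (p.1 = q.1 ∧ H.Adj p.2 q.2)
  symm := by
    constructor
    rintro ⟨a, b⟩ ⟨c, d⟩ (h | ⟨h1, h2⟩)
    · exact Or.inl h.symm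
    · exact Or.inr ⟨h1.symm, h2.symm⟩
  loopless := by
    constructor
    rintro ⟨a, b⟩ (h | ⟨h1, h2⟩)
    · exact G.irrefl h
    · exact H.irrefl h2

/-- A vertex `w` is undefended with respect to `g` if `g w = 0` and `g x = 0`
for every neighbour `x` of `w`. -/
def Undefended {α : Type*} (G : SimpleGraph α) (g : α → ℕ) (w : α) : Prop :=
  g w = 0 ∧ ∀ x, G.Adj w x → g x = 0

/-- A weak Roman dominating function. -/
def IsWRDF {α : Type*} (G : SimpleGraph α) (f : α → ℕ) : Prop :=
  (∀ v, f v ≤ 2) ∧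
    ∀ v, f v = 0 → ∃ u, G.Adj u v ∧ 1 ≤ f u ∧
      ∀ w, ¬ Undefended G (Function.update (Function.update f v 1) u (f u - 1)) w

/-- The weak Roman domination number. -/
noncomputable def weakRomanNumber {α : Type*} (G : SimpleGraph α) [Fintype α] : ℕ :=
  sInf {k | ∃ f : α → ℕ, IsWRDF G f ∧ ∑ v, f v = k}

/-- A dominating set. -/
def IsDomSet {α : Type*} (G : SimpleGraph α) (D : Finset α) : Prop :=
  ∀ v ∉ D, ∃ u ∈ D, G.Adj u v

/-- The domination number. -/
noncomputable def domNumber {α : Type*} (G : SimpleGraph α) [Fintype α] : ℕ :=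
  sInf {k | ∃ D : Finset α, IsDomSet G D ∧ D.card = k}

/-- A total dominating set. -/
def IsTotalDomSet {α : Type*} (G : SimpleGraph α) (S : Finset α) : Prop :=
  ∀ v, ∃ u ∈ S, G.Adj u v

/-- The total domination number. -/
noncomputable def totalDomNumber {α : Type*} (G : SimpleGraph α) [Fintype α] : ℕ :=
  sInf {k | ∃ S : Finset α, IsTotalDomSet G S ∧ S.card = k}

/-- A double total dominating set: every vertex has at least two neighbours in `S`. -/
def IsDoubleTotalDomSet {α : Type*} (G : SimpleGraph α) (S : Finset α) : Prop :=
  ∀ v, ∃ u₁ ∈ S, ∃ u₂ ∈ S, u₁ ≠ u₂ ∧ G.Adj u₁ v ∧ G.Adj u₂ v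

/-- The double total domination number. -/
noncomputable def doubleTotalDomNumber {α : Type*} (G : SimpleGraph α) [Fintype α] : ℕ :=
  sInf {k | ∃ S : Finset α, IsDoubleTotalDomSet G S ∧ S.card = k}

/-- A 2-packing: the closed neighbourhoods of distinct members are disjoint. -/
def IsTwoPacking {α : Type*} (G : SimpleGraph α) (X : Finset α) : Prop :=
  ∀ u ∈ X, ∀ v ∈ X, u ≠ v →
    ∀ w, ¬ ((w = u ∨ G.Adj u w) ∧ (w = v ∨ G.Adj v w))

/-- The 2-packing number. -/
noncomputable def twoPackingNumber {α : Type*} (G : SimpleGraph α) [Fintype α] : ℕ :=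
  sSup {k | ∃ X : Finset α, IsTwoPacking G X ∧ X.card = k}

/-- A secure dominating set. -/
def IsSecureDomSet {α : Type*} (G : SimpleGraph α) (S : Finset α) : Prop :=
  IsDomSet G S ∧ ∀ v ∉ S, ∃ u ∈ S, G.Adj u v ∧ IsDomSet G (insert v (S.erase u))

/-- The secure domination number. -/
noncomputable def secureDomNumber {α : Type*} (G : SimpleGraph α) [Fintype α] : ℕ :=
  sInf {k | ∃ S : Finset α, IsSecureDomSet G S ∧ S.card = k}

/-- The corona product of two graphs. -/
def corona {α β : Type*} (G₁ : SimpleGraph α) (G₂ : SimpleGraph β) :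
    SimpleGraph (α ⊕ α × β) where
  Adj x y :=
    match x, y with
    | .inl a, .inl a' => G₁.Adj a a'
    | .inl a, .inr p => a = p.1
    | .inr p, .inl a => p.1 = a
    | .inr p, .inr q => p.1 = q.1 ∧ G₂.Adj p.2 q.2
  symm := by
    constructor
    rintro (a | p) (a' | q) h
    · exact G₁.adj_symm h
    · exact h.symm
    · exact h.symm
    · exact ⟨h.1.symm, G₂.adj_symm h.2⟩
  loopless := by
    constructor
    rintro (a | p) h
    · exact G₁.irrefl h
    · exact G₂.irrefl h.2


/-! A double total dominating set `S` of `G` yields the weak Roman dominating function of `G∘H`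
with value `1` on `S × {b}`, so `γ_r(G∘H) ≤ γ_{2,t}(G)`. Conversely, collapsing each fibre
`{v} × V(H)` to `min 2` of its weight turns a WRDF of `G∘H` into one of `G`, so
`γ_r(G) ≤ γ_r(G∘H)`; and two nonadjacent vertices `a, b` of `H` force every WRDF of `G∘H` to put
weight at least `2` on each block `N[x] × V(H)` (one unit cannot defend both `(x, a)` and
`(x, b)`). For a 2-packing these blocks are disjoint, so `2ρ(G) ≤ γ_r(G∘H)`. -/

section Existence

variable {α : Type*} [Fintype α] {G : SimpleGraph α}

lemma weakRomanNumber_le_sum {f : α → ℕ} (hf : IsWRDF G f) : weakRomanNumber G ≤ ∑ v, f v :=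
  Nat.sInf_le ⟨f, hf, rfl⟩

variable (G) in
lemma exists_isWRDF_sum_eq_weakRomanNumber :
    ∃ f : α → ℕ, IsWRDF G f ∧ ∑ v, f v = weakRomanNumber G := by
  have hne : {k | ∃ f : α → ℕ, IsWRDF G f ∧ ∑ v, f v = k}.Nonempty :=
    ⟨_, fun _ => 2, ⟨fun _ => le_rfl, fun _ h => absurd h two_ne_zero⟩, rfl⟩
  exact Nat.sInf_mem hne

variable (G) in
lemma exists_isTwoPacking_card_eq_twoPackingNumber :
    ∃ X : Finset α, IsTwoPacking G X ∧ X.card = twoPackingNumber G := by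
  have hne : {k | ∃ X : Finset α, IsTwoPacking G X ∧ X.card = k}.Nonempty :=
    ⟨0, ∅, by simp [IsTwoPacking], rfl⟩
  refine Nat.sSup_mem hne ⟨Fintype.card α, ?_⟩
  rintro k ⟨X, -, rfl⟩
  exact X.card_le_univ

lemma exists_isDoubleTotalDomSet_card_eq_doubleTotalDomNumber
    (hG : ∀ v, ∃ u₁ u₂, u₁ ≠ u₂ ∧ G.Adj v u₁ ∧ G.Adj v u₂) :
    ∃ S : Finset α, IsDoubleTotalDomSet G S ∧ S.card = doubleTotalDomNumber G := by
  have hne : {k | ∃ S : Finset α, IsDoubleTotalDomSet G S ∧ S.card = k}.Nonempty := by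
    refine ⟨_, univ, fun v => ?_, rfl⟩
    obtain ⟨u₁, u₂, hne, h₁, h₂⟩ := hG v
    exact ⟨u₁, mem_univ _, u₂, mem_univ _, hne, h₁.symm, h₂.symm⟩
  exact Nat.sInf_mem hne

end Existence

section Block

variable {V : Type*} {Γ : SimpleGraph V} {f : V → ℕ}

lemma eq_zero_of_sum_le_one {B : Finset V} (hB : ∑ v ∈ B, f v ≤ 1) {p q : V} (hp : p ∈ B)
    (hq : q ∈ B) (hpq : p ≠ q) (hfp : 1 ≤ f p) : f q = 0 := by
  have : f p + f q ≤ ∑ v ∈ B, f v := by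
    rw [← sum_pair hpq]
    exact sum_le_sum_of_subset (insert_subset hp (singleton_subset_iff.mpr hq))
  omega

lemma IsWRDF.two_le_sum_of_pos_ne (hf : IsWRDF Γ f) {B : Finset V} {s t q : V}
    (hst : s ≠ t) (hadj : ¬ Γ.Adj s t) (hs : s ∈ B) (ht : t ∈ B)
    (hsB : ∀ u, Γ.Adj s u → u ∈ B) (htB : ∀ u, Γ.Adj t u → u ∈ B)
    (hq : q ∈ B) (hfq : 1 ≤ f q) (hqs : q ≠ s) : 2 ≤ ∑ v ∈ B, f v := by
  -- the only unit on `B` sits on `q` and must move to `s`, which leaves `t` undefended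
  by_contra! hlt
  have hB : ∑ v ∈ B, f v ≤ 1 := by omega
  have hzero : ∀ p ∈ B, p ≠ q → f p = 0 := fun p hp hpq =>
    eq_zero_of_sum_le_one hB hq hp hpq.symm hfq
  obtain ⟨u, hus, hfu, hdef⟩ := hf.2 s (hzero s hs hqs.symm)
  obtain rfl : u = q := by
    by_contra huq
    have := hzero u (hsB u hus.symm) huq
    omega
  have hfu1 : f u = 1 :=
    le_antisymm ((single_le_sum (fun _ _ => Nat.zero_le _) hq).trans hB) hfu
  have htu : t ≠ u := by
    rintro rfl
    exact hadj hus.symm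
  refine hdef t ⟨?_, fun x htx => ?_⟩
  · simp only [Function.update_apply, if_neg htu, if_neg hst.symm]
    exact hzero t ht htu
  · have hxs : x ≠ s := by
      rintro rfl
      exact hadj htx.symm
    simp only [Function.update_apply, if_neg hxs]
    split_ifs with hxu
    · omega
    · exact hzero x (htB x htx) hxu

lemma IsWRDF.two_le_sum_of_not_adj (hf : IsWRDF Γ f) {B : Finset V} {s t : V}
    (hst : s ≠ t) (hadj : ¬ Γ.Adj s t) (hs : s ∈ B) (ht : t ∈ B)
    (hsB : ∀ u, Γ.Adj s u → u ∈ B) (htB : ∀ u, Γ.Adj t u → u ∈ B) :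
    2 ≤ ∑ v ∈ B, f v := by
  obtain ⟨q, hq, hfq⟩ : ∃ q ∈ B, 1 ≤ f q := by
    by_cases hfs : f s = 0
    · obtain ⟨u, hus, hfu, -⟩ := hf.2 s hfs
      exact ⟨u, hsB u hus.symm, hfu⟩
    · exact ⟨s, hs, Nat.one_le_iff_ne_zero.mpr hfs⟩
  by_cases hqs : q = s
  · exact hf.two_le_sum_of_pos_ne hst.symm (fun h => hadj h.symm) ht hs htB hsB hq hfq
      (hqs ▸ hst)
  · exact hf.two_le_sum_of_pos_ne hst hadj hs ht hsB htB hq hfq hqs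

end Block

noncomputable def closedNbhdBlock {α : Type*} [Fintype α] (G : SimpleGraph α) (β : Type*)
    [Fintype β] (x : α) : Finset (α × β) :=
  univ.filter fun p => p.1 = x ∨ G.Adj x p.1

section LexProd

variable {α β : Type*} {G : SimpleGraph α} {H : SimpleGraph β}

lemma isWRDF_lexProd_of_isDoubleTotalDomSet {S : Finset α} (hS : IsDoubleTotalDomSet G S)
    (b : β) : IsWRDF (lexProd G H) fun p => if p ∈ S ×ˢ {b} then 1 else 0 := by
  refine ⟨fun p => by beta_reduce; split_ifs <;> omega, fun p _ => ?_⟩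
  obtain ⟨u, hu, -, -, -, hup, -⟩ := hS p.1
  refine ⟨(u, b), Or.inl hup, by simp [hu], ?_⟩
  rintro w ⟨-, hw⟩
  -- `w.1` has a second neighbour `s ≠ u` in `S`, and `(s, b)` keeps its unit after the move
  obtain ⟨s, hs, hsu, hsw⟩ : ∃ s ∈ S, s ≠ u ∧ G.Adj s w.1 := by
    obtain ⟨s₁, hs₁, s₂, hs₂, hne, h₁, h₂⟩ := hS w.1
    by_cases h : s₁ = u
    · exact ⟨s₂, hs₂, fun h' => hne (h.trans h'.symm), h₂⟩
    · exact ⟨s₁, hs₁, h, h₁⟩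
  have := hw (s, b) (Or.inl hsw.symm)
  simp only [Function.update_apply] at this
  simp [hsu, hs] at this

lemma weakRomanNumber_lexProd_le_card [Fintype α] [Fintype β] {S : Finset α}
    (hS : IsDoubleTotalDomSet G S) (b : β) : weakRomanNumber (lexProd G H) ≤ S.card := by
  refine (weakRomanNumber_le_sum (isWRDF_lexProd_of_isDoubleTotalDomSet hS b)).trans_eq ?_
  simp only [sum_boole, Nat.cast_id, filter_mem_eq_inter, univ_inter, card_product,
    card_singleton, mul_one]

noncomputable def fibreWeight [Fintype β] (f : α × β → ℕ) (v : α) : ℕ := min 2 (∑ b, f (v, b))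

lemma undefended_lexProd {f : α × β → ℕ} {g : α → ℕ} (hfg : ∀ p, g p.1 = 0 → f p = 0)
    {w : α} (hw : Undefended G g w) (b : β) : Undefended (lexProd G H) f (w, b) := by
  refine ⟨hfg _ hw.1, ?_⟩
  rintro ⟨y, d⟩ (hwy | ⟨rfl, -⟩)
  · exact hfg _ (hw.2 y hwy)
  · exact hfg _ hw.1

lemma isWRDF_fibreWeight [Fintype β] [Nonempty β] {f : α × β → ℕ}
    (hf : IsWRDF (lexProd G H) f) : IsWRDF G (fibreWeight f) := by
  have hle_sum : ∀ v c, f (v, c) ≤ ∑ b, f (v, b) := fun v c =>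
    single_le_sum (f := fun b => f (v, b)) (fun _ _ => Nat.zero_le _) (mem_univ c)
  have hfibre_zero : ∀ v, fibreWeight f v = 0 → ∀ b, f (v, b) = 0 := fun v hv b => by
    have := hle_sum v b
    unfold fibreWeight at hv
    omega
  refine ⟨fun v => min_le_left _ _, fun v hv => ?_⟩
  obtain b₀ : β := Classical.arbitrary β
  obtain ⟨⟨u, c⟩, hadj, hfuc, hdef⟩ := hf.2 (v, b₀) (hfibre_zero v hv b₀)
  have huv : u ≠ v := by
    rintro rfl
    exact absurd (hfibre_zero u hv c) (by omega)
  have hGuv : G.Adj u v := hadj.resolve_right fun h => huv h.1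
  have hfu : 1 ≤ fibreWeight f u := le_min (by omega) ((hle_sum u c).trans' hfuc)
  refine ⟨u, hGuv, hfu, fun w hw => hdef (w, b₀) (undefended_lexProd ?_ hw b₀)⟩
  -- after the moves, a fibre of weight `0` in `G` carries no weight in `G∘H`
  rintro ⟨y, d⟩ hy
  simp only [Function.update_apply] at hy ⊢
  by_cases hyu : y = u
  · subst hyu
    simp only [if_true] at hy
    have hsum : ∑ b, f (y, b) ≤ 1 := by unfold fibreWeight at hy hfu; omega
    split_ifs with hdc hdv
    · have := hle_sum y c
      omega
    · exact absurd (congrArg Prod.fst hdv) huv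
    · exact eq_zero_of_sum_le_one hsum (mem_univ c) (mem_univ d) (fun h => hdc (by rw [h]))
        hfuc
  · by_cases hyv : y = v
    · simp [hyv, huv.symm] at hy
    · rw [if_neg fun h => hyu (congrArg Prod.fst h),
        if_neg fun h => hyv (congrArg Prod.fst h)]
      simp only [hyu, hyv, if_false] at hy
      exact hfibre_zero y hy d

lemma weakRomanNumber_le_weakRomanNumber_lexProd [Fintype α] [Fintype β] [Nonempty β] :
    weakRomanNumber G ≤ weakRomanNumber (lexProd G H) := by
  obtain ⟨f, hf, hsum⟩ := exists_isWRDF_sum_eq_weakRomanNumber (lexProd G H)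
  calc weakRomanNumber G ≤ ∑ v, fibreWeight f v :=
        weakRomanNumber_le_sum (isWRDF_fibreWeight hf)
    _ ≤ ∑ p, f p := by
      rw [Fintype.sum_prod_type]
      exact sum_le_sum fun v _ => min_le_right _ _
    _ = weakRomanNumber (lexProd G H) := hsum

lemma mem_closedNbhdBlock [Fintype α] [Fintype β] {x : α} {p : α × β} :
    p ∈ closedNbhdBlock G β x ↔ p.1 = x ∨ G.Adj x p.1 := by
  simp [closedNbhdBlock]

lemma IsWRDF.two_le_sum_closedNbhdBlock [Fintype α] [Fintype β] {f : α × β → ℕ}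
    (hf : IsWRDF (lexProd G H) f) {a b : β} (hab : a ≠ b) (hHab : ¬ H.Adj a b) (x : α) :
    2 ≤ ∑ p ∈ closedNbhdBlock G β x, f p := by
  have hblock : ∀ e : β, ∀ p, (lexProd G H).Adj (x, e) p → p ∈ closedNbhdBlock G β x := by
    rintro e ⟨y, d⟩ (h | ⟨rfl, -⟩)
    exacts [mem_closedNbhdBlock.mpr (Or.inr h), mem_closedNbhdBlock.mpr (Or.inl rfl)]
  exact hf.two_le_sum_of_not_adj (s := (x, a)) (t := (x, b))
    (fun h => hab (congrArg Prod.snd h)) (by rintro (h | ⟨-, h⟩); exacts [G.irrefl h, hHab h])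
    (mem_closedNbhdBlock.mpr (Or.inl rfl)) (mem_closedNbhdBlock.mpr (Or.inl rfl))
    (hblock a) (hblock b)

lemma two_mul_card_le_sum_of_isTwoPacking [Fintype α] [Fintype β] {f : α × β → ℕ}
    (hf : IsWRDF (lexProd G H) f) {a b : β} (hab : a ≠ b) (hHab : ¬ H.Adj a b) {X : Finset α}
    (hX : IsTwoPacking G X) : 2 * X.card ≤ ∑ p, f p := by
  have hdisj : (X : Set α).PairwiseDisjoint (closedNbhdBlock G β) := by
    intro x hx y hy hxy
    refine disjoint_left.mpr fun p hpx hpy => hX x hx y hy hxy p.1 ⟨?_, ?_⟩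
    · simpa [eq_comm] using mem_closedNbhdBlock.mp hpx
    · simpa [eq_comm] using mem_closedNbhdBlock.mp hpy
  calc 2 * X.card = ∑ _x ∈ X, 2 := by rw [sum_const, smul_eq_mul, mul_comm]
    _ ≤ ∑ x ∈ X, ∑ p ∈ closedNbhdBlock G β x, f p :=
      sum_le_sum fun x _ => hf.two_le_sum_closedNbhdBlock hab hHab x
    _ = ∑ p ∈ X.biUnion (closedNbhdBlock G β), f p := (sum_biUnion hdisj).symm
    _ ≤ ∑ p, f p := sum_le_sum_of_subset (subset_univ _)

lemma two_mul_twoPackingNumber_le_weakRomanNumber_lexProd [Fintype α] [Fintype β] {a b : β}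
    (hab : a ≠ b) (hHab : ¬ H.Adj a b) :
    2 * twoPackingNumber G ≤ weakRomanNumber (lexProd G H) := by
  obtain ⟨f, hf, hsum⟩ := exists_isWRDF_sum_eq_weakRomanNumber (lexProd G H)
  obtain ⟨X, hX, hcard⟩ := exists_isTwoPacking_card_eq_twoPackingNumber G
  rw [← hsum, ← hcard]
  exact two_mul_card_le_sum_of_isTwoPacking hf hab hHab hX

end LexProd

/-- If `G` has minimum degree at least two and
`γ_{2,t}(G) = max{γ_r(G), 2ρ(G)}`, then for any noncomplete graph `H`,
`γ_r(G∘H) = γ_{2,t}(G)`. -/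
theorem weakRoman_lexProd_eq_doubleTotalDom {α β : Type*} [Fintype α] [Fintype β]
    (G : SimpleGraph α) (H : SimpleGraph β)
    (hG : ∀ v : α, ∃ u₁ u₂, u₁ ≠ u₂ ∧ G.Adj v u₁ ∧ G.Adj v u₂)
    (hyp : doubleTotalDomNumber G = max (weakRomanNumber G) (2 * twoPackingNumber G))
    (hH : ∃ a b : β, a ≠ b ∧ ¬ H.Adj a b) :
    weakRomanNumber (lexProd G H) = doubleTotalDomNumber G := by
  obtain ⟨a, b, hab, hHab⟩ := hH
  have : Nonempty β := ⟨a⟩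
  obtain ⟨S, hS, hcard⟩ := exists_isDoubleTotalDomSet_card_eq_doubleTotalDomNumber hG
  refine le_antisymm (hcard ▸ weakRomanNumber_lexProd_le_card hS b) ?_
  rw [hyp]
  exact max_le weakRomanNumber_le_weakRomanNumber_lexProd
    (two_mul_twoPackingNumber_le_weakRomanNumber_lexProd hab hHab)
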